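/- Let G, D be finite sets in a metric space, C a finite center set, Γ : C → ℝ≥0, σ : G × C → ℝ≥0 and π : D × C → ℝ≥0 both consistent with Γ (i.e., ∑_{x∈G}σ(x,u) = Γ(u) = ∑_{y∈D}π(y,u) for all u). Suppose all points of G ∪ D are within distance R of a point c. Then for z ≥ 1 and 0 < ε < 1: |∑_{x,u}σ(x,u)d(x,u)^z − ∑_{y,u}π(y,u)d(y,u)^z| ≤ ε·∑_{x,u}σ(x,u)d(x,u)^z + (6z/ε)^(z−1)·(∑_{x,u}σ(x,u)d(x,c)^z + ∑_{y,u}π(y,u)d(y,c)^z). -/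

import Mathlib

/-!
At a fixed centre `u` both assignments carry the mass `Γ u`, so any pointwise bound
`|f x - g y| ≤ F x + H y` transfers to the weighted sums: each weighted average is compared with
the constant `min_y (g y + H y)` (resp. `min_x (f x + F x)`), and no explicit coupling is needed.
The pointwise bound is `|a^z - b^z| ≤ ε a^z + (3z/ε)^(z-1) |a - b|^z`, obtained from the convexity
estimate `(a + b)^z ≤ a^z / λ^(z-1) + b^z / μ^(z-1)` (`λ + μ = 1`) with `μ = ε / (3z)`, where
Bernoulli's inequality gives `λ^(z-1) ≥ 1 - ε/3 ≥ 1/(1+ε)`. The triangle inequality through `c`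
and `(s + t)^z ≤ 2^(z-1) (s^z + t^z)` turn `|d(x,u) - d(y,u)|^z` into the `c`-terms, doubling
the constant `3z/ε`.
-/

open Finset

namespace Real

lemma rpow_add_le_mul_rpow_add_rpow {p a b : ℝ} (ha : 0 ≤ a) (hb : 0 ≤ b) (hp : 1 ≤ p) :
    (a + b) ^ p ≤ 2 ^ (p - 1) * (a ^ p + b ^ p) := by
  lift a to NNReal using ha
  lift b to NNReal using hb
  exact_mod_cast NNReal.rpow_add_le_mul_rpow_add_rpow a b hp

lemma add_rpow_le_div_rpow_add_div_rpow {p a b s t : ℝ} (ha : 0 ≤ a) (hb : 0 ≤ b)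
    (hs : 0 < s) (ht : 0 < t) (hst : s + t = 1) (hp : 1 ≤ p) :
    (a + b) ^ p ≤ a ^ p / s ^ (p - 1) + b ^ p / t ^ (p - 1) := by
  have jensen := (convexOn_rpow hp).2 (div_nonneg ha hs.le) (div_nonneg hb ht.le) hs.le ht.le hst
  have weight : ∀ {r w : ℝ}, 0 ≤ r → 0 < w → w * (r / w) ^ p = r ^ p / w ^ (p - 1) := by
    intro r w hr hw
    rw [div_rpow hr hw.le, rpow_sub_one hw.ne']
    field_simp
  simpa only [smul_eq_mul, mul_div_cancel₀ _ hs.ne', mul_div_cancel₀ _ ht.ne', weight ha hs,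
    weight hb ht] using jensen

variable {z ε : ℝ}

lemma one_le_one_add_mul_one_sub_div_rpow (hz : 1 ≤ z) (hε0 : 0 < ε) (hε1 : ε < 1) :
    1 ≤ (1 + ε) * (1 - ε / (3 * z)) ^ (z - 1) := by
  have hzμ : z * (ε / (3 * z)) = ε / 3 := by field_simp
  have hμ : ε / (3 * z) < 1 := by
    rw [div_lt_one (by positivity)]; linarith
  have hμ0 : 0 < ε / (3 * z) := by positivity
  have bernoulli : 1 - ε / 3 ≤ (1 - ε / (3 * z)) ^ (z - 1) :=
    calc 1 - ε / 3 = 1 + z * -(ε / (3 * z)) := by rw [mul_neg, hzμ]; ring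
      _ ≤ (1 + -(ε / (3 * z))) ^ z := one_add_mul_self_le_rpow_one_add (by linarith) hz
      _ ≤ (1 - ε / (3 * z)) ^ (z - 1) := by
        rw [← sub_eq_add_neg]
        exact rpow_le_rpow_of_exponent_ge (by linarith) (by linarith) (by linarith)
  nlinarith

lemma rpow_sub_rpow_le_of_le (hz : 1 ≤ z) (hε0 : 0 < ε) (hε1 : ε < 1) {a b : ℝ}
    (hb : 0 ≤ b) (hba : b ≤ a) :
    a ^ z - b ^ z ≤ ε * b ^ z + (3 * z / ε) ^ (z - 1) * (a - b) ^ z := by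
  have hμ0 : 0 < ε / (3 * z) := by positivity
  have hμ1 : ε / (3 * z) < 1 := by
    rw [div_lt_one (by positivity)]; linarith
  have convex := add_rpow_le_div_rpow_add_div_rpow hb (sub_nonneg.2 hba) (sub_pos.2 hμ1) hμ0
    (sub_add_cancel 1 _) hz
  have near : b ^ z / (1 - ε / (3 * z)) ^ (z - 1) ≤ (1 + ε) * b ^ z := by
    rw [div_le_iff₀ (rpow_pos_of_pos (sub_pos.2 hμ1) _)]
    nlinarith [one_le_one_add_mul_one_sub_div_rpow hz hε0 hε1, rpow_nonneg hb z]
  have far : (a - b) ^ z / (ε / (3 * z)) ^ (z - 1) = (3 * z / ε) ^ (z - 1) * (a - b) ^ z := by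
    rw [← inv_div (3 * z), inv_rpow (by positivity), div_inv_eq_mul, mul_comm]
  rw [add_sub_cancel, far] at convex
  linarith

lemma abs_rpow_sub_rpow_le (hz : 1 ≤ z) (hε0 : 0 < ε) (hε1 : ε < 1) {a b : ℝ}
    (ha : 0 ≤ a) (hb : 0 ≤ b) :
    |a ^ z - b ^ z| ≤ ε * a ^ z + (3 * z / ε) ^ (z - 1) * |a - b| ^ z := by
  rcases le_total b a with hba | hab
  · have hpow : b ^ z ≤ a ^ z := rpow_le_rpow hb hba (by linarith)
    rw [abs_of_nonneg (sub_nonneg.2 hpow), abs_of_nonneg (sub_nonneg.2 hba)]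
    nlinarith [rpow_sub_rpow_le_of_le hz hε0 hε1 hb hba]
  · have hpow : a ^ z ≤ b ^ z := rpow_le_rpow ha hab (by linarith)
    rw [abs_sub_comm, abs_sub_comm a, abs_of_nonneg (sub_nonneg.2 hpow),
      abs_of_nonneg (sub_nonneg.2 hab)]
    exact rpow_sub_rpow_le_of_le hz hε0 hε1 ha hab

end Real

open Real in
lemma abs_dist_rpow_sub_dist_rpow_le {X : Type*} [PseudoMetricSpace X] {z ε : ℝ} (hz : 1 ≤ z)
    (hε0 : 0 < ε) (hε1 : ε < 1) (x y u c : X) :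
    |dist x u ^ z - dist y u ^ z|
      ≤ ε * dist x u ^ z + (6 * z / ε) ^ (z - 1) * (dist x c ^ z + dist y c ^ z) :=
  calc |dist x u ^ z - dist y u ^ z|
      ≤ ε * dist x u ^ z + (3 * z / ε) ^ (z - 1) * |dist x u - dist y u| ^ z :=
        abs_rpow_sub_rpow_le hz hε0 hε1 dist_nonneg dist_nonneg
    _ ≤ ε * dist x u ^ z + (3 * z / ε) ^ (z - 1) * (dist x c + dist y c) ^ z := by
        gcongr
        exact (abs_dist_sub_le x y u).trans (dist_triangle_right x y c)
    _ ≤ ε * dist x u ^ z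
          + (3 * z / ε) ^ (z - 1) * (2 ^ (z - 1) * (dist x c ^ z + dist y c ^ z)) := by
        gcongr
        exact rpow_add_le_mul_rpow_add_rpow dist_nonneg dist_nonneg hz
    _ = ε * dist x u ^ z + (6 * z / ε) ^ (z - 1) * (dist x c ^ z + dist y c ^ z) := by
        rw [← mul_assoc, ← mul_rpow (by positivity) zero_le_two]
        ring_nf

section EqualMass

variable {α β ι : Type*} {s : Finset α} {t : Finset β}

lemma sum_mul_le_sum_mul_of_forall_le {p f : α → ℝ} {q g : β → ℝ} (hp : ∀ x ∈ s, 0 ≤ p x)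
    (hq : ∀ y ∈ t, 0 ≤ q y) (hpq : ∑ x ∈ s, p x = ∑ y ∈ t, q y)
    (hfg : ∀ x ∈ s, ∀ y ∈ t, f x ≤ g y) :
    ∑ x ∈ s, p x * f x ≤ ∑ y ∈ t, q y * g y := by
  rcases t.eq_empty_or_nonempty with rfl | ht
  · have hp0 : ∀ x ∈ s, p x = 0 := (sum_eq_zero_iff_of_nonneg hp).1 (by simpa using hpq)
    rw [sum_empty]
    exact le_of_eq (sum_eq_zero fun x hx => by rw [hp0 x hx, zero_mul])
  · calc ∑ x ∈ s, p x * f x ≤ ∑ x ∈ s, p x * t.inf' ht g :=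
          sum_le_sum fun x hx =>
            mul_le_mul_of_nonneg_left (le_inf' ht g fun y hy => hfg x hx y hy) (hp x hx)
      _ = ∑ y ∈ t, q y * t.inf' ht g := by rw [← sum_mul, hpq, sum_mul]
      _ ≤ ∑ y ∈ t, q y * g y :=
          sum_le_sum fun y hy => mul_le_mul_of_nonneg_left (inf'_le g hy) (hq y hy)

lemma abs_sum_mul_sub_sum_mul_le {p f F : α → ℝ} {q g H : β → ℝ} (hp : ∀ x ∈ s, 0 ≤ p x)
    (hq : ∀ y ∈ t, 0 ≤ q y) (hpq : ∑ x ∈ s, p x = ∑ y ∈ t, q y)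
    (hfg : ∀ x ∈ s, ∀ y ∈ t, |f x - g y| ≤ F x + H y) :
    |∑ x ∈ s, p x * f x - ∑ y ∈ t, q y * g y|
      ≤ ∑ x ∈ s, p x * F x + ∑ y ∈ t, q y * H y := by
  have upper := sum_mul_le_sum_mul_of_forall_le (f := fun x => f x - F x)
    (g := fun y => g y + H y) hp hq hpq fun x hx y hy => by
      linarith [(abs_sub_le_iff.1 (hfg x hx y hy)).1]
  have lower := sum_mul_le_sum_mul_of_forall_le (f := fun y => g y - H y)
    (g := fun x => f x + F x) hq hp hpq.symm fun y hy x hx => by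
      linarith [(abs_sub_le_iff.1 (hfg x hx y hy)).2]
  simp only [mul_sub, mul_add, sum_sub_distrib, sum_add_distrib] at upper lower
  exact abs_sub_le_iff.2 ⟨by linarith, by linarith⟩

lemma abs_sum_sum_mul_sub_sum_sum_mul_le (C : Finset ι) {σ f F : α → ι → ℝ}
    {π g H : β → ι → ℝ} (hσ : ∀ x ∈ s, ∀ u ∈ C, 0 ≤ σ x u) (hπ : ∀ y ∈ t, ∀ u ∈ C, 0 ≤ π y u)
    (hσπ : ∀ u ∈ C, ∑ x ∈ s, σ x u = ∑ y ∈ t, π y u)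
    (hfg : ∀ u ∈ C, ∀ x ∈ s, ∀ y ∈ t, |f x u - g y u| ≤ F x u + H y u) :
    |∑ x ∈ s, ∑ u ∈ C, σ x u * f x u - ∑ y ∈ t, ∑ u ∈ C, π y u * g y u|
      ≤ ∑ x ∈ s, ∑ u ∈ C, σ x u * F x u + ∑ y ∈ t, ∑ u ∈ C, π y u * H y u := by
  rw [sum_comm, sum_comm (s := t), sum_comm (s := s), sum_comm (s := t), ← sum_sub_distrib,
    ← sum_add_distrib]
  exact (abs_sum_le_sum_abs _ _).trans <| sum_le_sum fun u hu =>
    abs_sum_mul_sub_sum_mul_le (fun x hx => hσ x hx u hu) (fun y hy => hπ y hy u hu) (hσπ u hu)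
      (hfg u hu)

end EqualMass

theorem matched_assignments_cost_error_general
    {X : Type*} [MetricSpace X] (c : X) (z ε : ℝ)
    (hz : 1 ≤ z) (hε0 : 0 < ε) (hε1 : ε < 1)
    (G D C : Finset X) (Γ : X → ℝ) (σ π : X → X → ℝ)
    (hσ : ∀ x ∈ G, ∀ u ∈ C, 0 ≤ σ x u)
    (hπ : ∀ y ∈ D, ∀ u ∈ C, 0 ≤ π y u)
    (hσΓ : ∀ u ∈ C, ∑ x ∈ G, σ x u = Γ u)
    (hπΓ : ∀ u ∈ C, ∑ y ∈ D, π y u = Γ u) :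
    |(∑ x ∈ G, ∑ u ∈ C, σ x u * dist x u ^ z)
        - ∑ y ∈ D, ∑ u ∈ C, π y u * dist y u ^ z|
      ≤ ε * (∑ x ∈ G, ∑ u ∈ C, σ x u * dist x u ^ z)
        + (6 * z / ε) ^ (z - 1) *
          ((∑ x ∈ G, ∑ u ∈ C, σ x u * dist x c ^ z)
            + ∑ y ∈ D, ∑ u ∈ C, π y u * dist y c ^ z) := by
  set K := (6 * z / ε) ^ (z - 1)
  have bound := abs_sum_sum_mul_sub_sum_sum_mul_le C hσ hπ
    (F := fun x u => ε * dist x u ^ z + K * dist x c ^ z) (H := fun y _ => K * dist y c ^ z)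
    (fun u hu => (hσΓ u hu).trans (hπΓ u hu).symm) fun u _ x _ y _ => by
      simpa only [mul_add, add_assoc] using abs_dist_rpow_sub_dist_rpow_le hz hε0 hε1 x y u c
  refine bound.trans_eq ?_
  simp only [mul_add, sum_add_distrib, mul_sum, mul_left_comm ε, mul_left_comm K, add_assoc]

theorem matched_assignments_cost_error
    {X : Type*} [MetricSpace X] [DecidableEq X] (c : X) (z ε R : ℝ)
    (hz : 1 ≤ z) (hε0 : 0 < ε) (hε1 : ε < 1) (hR : 0 < R)
    (G D C : Finset X) (Γ : X → ℝ) (σ π : X → X → ℝ)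
    (hσ : ∀ x ∈ G, ∀ u ∈ C, 0 ≤ σ x u)
    (hπ : ∀ y ∈ D, ∀ u ∈ C, 0 ≤ π y u)
    (hσΓ : ∀ u ∈ C, ∑ x ∈ G, σ x u = Γ u)
    (hπΓ : ∀ u ∈ C, ∑ y ∈ D, π y u = Γ u)
    (hGR : ∀ x ∈ G ∪ D, dist x c ≤ R) :
    |(∑ x ∈ G, ∑ u ∈ C, σ x u * dist x u ^ z)
        - ∑ y ∈ D, ∑ u ∈ C, π y u * dist y u ^ z|
      ≤ ε * (∑ x ∈ G, ∑ u ∈ C, σ x u * dist x u ^ z)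
        + (6 * z / ε) ^ (z - 1) *
          ((∑ x ∈ G, ∑ u ∈ C, σ x u * dist x c ^ z)
            + ∑ y ∈ D, ∑ u ∈ C, π y u * dist y c ^ z) :=
  matched_assignments_cost_error_general c z ε hz hε0 hε1 G D C Γ σ π hσ hπ hσΓ hπΓ
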